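/- arXiv:cs/0601009 — 4 statements merged into one kernel-verified Lean document; each statement's English description precedes it below -/
import Mathlib

section
/- Let f : [-1/2, 1/2] → [0, ∞) be a measurable function with ∫ f dλ < ∞. Then lim_{s→∞} (1/log s) ∫_{-1/2}^{1/2} log(1 + s·f(λ)) dλ = μ({λ ∈ [-1/2,1/2] : f(λ) > 0}), where μ is Lebesgue measure. -/
open Real Filter MeasureTheory Set

/-- For nonnegative integrable `f` on `[-1/2, 1/2]`,
`(1 / log s) ∫ log (1 + s f) → μ {f > 0}` as `s → ∞`. -/
theorem stmt_7 (f : ℝ → ℝ) (hf : Measurable f) (hf0 : ∀ x, 0 ≤ f x)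
    (hfint : MeasureTheory.IntegrableOn f (Set.Icc (-(1/2) : ℝ) (1/2))) :
    Filter.Tendsto
      (fun s : ℝ =>
        (1 / Real.log s) *
          ∫ l in Set.Icc (-(1/2) : ℝ) (1/2), Real.log (1 + s * f l))
      Filter.atTop
      (nhds (MeasureTheory.volume
        {l ∈ Set.Icc (-(1/2) : ℝ) (1/2) | 0 < f l}).toReal) := by
  set I : Set ℝ := Set.Icc (-(1/2) : ℝ) (1/2) with hI
  set μr := volume.restrict I with hμr
  have hS : MeasurableSet {x : ℝ | 0 < f x} := measurableSet_lt measurable_const hf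
  set g : ℝ → ℝ := Set.indicator {x : ℝ | 0 < f x} (fun _ => 1) with hg
  set bound : ℝ → ℝ := fun l => Set.indicator {x : ℝ | 0 < f x} (fun _ => 2) l + f l / Real.log 2
    with hbound
  have hlog2 : (0:ℝ) < Real.log 2 := Real.log_pos (by norm_num)
  -- main DCT step
  have main : Tendsto (fun s : ℝ => ∫ l, (1 / Real.log s) * Real.log (1 + s * f l) ∂μr)
      atTop (nhds (∫ l, g l ∂μr)) := by
    apply tendsto_integral_filter_of_dominated_convergence bound
    · filter_upwards with s
      exact (measurable_const.mul ((measurable_const.add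
        (measurable_const.mul hf)).log)).aestronglyMeasurable
    · filter_upwards [eventually_ge_atTop (2:ℝ)] with s hs
      filter_upwards with l
      have hs1 : (1:ℝ) < s := by linarith
      have hlogs : 0 < Real.log s := Real.log_pos hs1
      have hfl := hf0 l
      have h1 : (0:ℝ) ≤ Real.log (1 + s * f l) :=
        Real.log_nonneg (by nlinarith)
      have hnn : 0 ≤ (1 / Real.log s) * Real.log (1 + s * f l) :=
        mul_nonneg (by positivity) h1
      rw [Real.norm_of_nonneg hnn]
      rcases eq_or_lt_of_le hfl with h0 | hpos
      · have hb0 : 0 ≤ bound l := add_nonneg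
          (Set.indicator_nonneg (fun _ _ => by norm_num) l) (by positivity)
        rw [← h0]
        simpa using hb0
      · have hind : Set.indicator {x : ℝ | 0 < f x} (fun _ => (2:ℝ)) l = 2 :=
          Set.indicator_of_mem (show l ∈ {x : ℝ | 0 < f x} from hpos) _
        rw [hbound]
        simp only [hind]
        have key : Real.log (1 + s * f l) ≤ 2 * Real.log s + (Real.log s / Real.log 2) * f l := by
          have h2 : (1 + s * f l) ≤ (1 + s) * (1 + f l) := by nlinarith
          have h3 : Real.log (1 + s * f l) ≤ Real.log ((1+s)*(1+f l)) :=
            Real.log_le_log (by nlinarith) h2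
          rw [Real.log_mul (by nlinarith) (by nlinarith)] at h3
          have h4 : Real.log (1 + s) ≤ 2 * Real.log s := by
            have : Real.log (1+s) ≤ Real.log (s^2) := Real.log_le_log (by linarith) (by nlinarith)
            rwa [Real.log_pow, Nat.cast_ofNat, two_mul, ← two_mul] at this
          have h5 : Real.log (1 + f l) ≤ f l := by
            have := Real.log_le_sub_one_of_pos (x := 1 + f l) (by linarith)
            linarith
          have h6 : Real.log (1 + f l) ≤ (Real.log s / Real.log 2) * f l := by
            have hss : (1:ℝ) ≤ Real.log s / Real.log 2 := by
              rw [le_div_iff₀ hlog2]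
              have : Real.log 2 ≤ Real.log s := Real.log_le_log (by norm_num) hs
              linarith
            calc Real.log (1 + f l) ≤ f l := h5
              _ = 1 * f l := (one_mul _).symm
              _ ≤ (Real.log s / Real.log 2) * f l := mul_le_mul_of_nonneg_right hss hfl
          linarith
        have : (1 / Real.log s) * Real.log (1 + s * f l)
            ≤ (1 / Real.log s) * (2 * Real.log s + (Real.log s / Real.log 2) * f l) :=
          mul_le_mul_of_nonneg_left key (by positivity)
        have heq : (1 / Real.log s) * (2 * Real.log s + (Real.log s / Real.log 2) * f l)
            = 2 + f l / Real.log 2 := by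
          field_simp
        linarith [this, heq ▸ this]
    · -- integrability of bound
      apply Integrable.add
      · exact (integrable_const (2:ℝ)).indicator hS
      · exact hfint.div_const _
    · -- pointwise limit
      filter_upwards with l
      rcases eq_or_lt_of_le (hf0 l) with h0 | hpos
      · have : ∀ s : ℝ, (1 / Real.log s) * Real.log (1 + s * f l) = 0 := by
          intro s; rw [← h0]; simp
        simp only [this]
        have hgl : g l = 0 := Set.indicator_of_notMem (by simp [← h0]) _
        rw [hgl]
        exact tendsto_const_nhds
      · have hgl : g l = 1 :=
          Set.indicator_of_mem (show l ∈ {x : ℝ | 0 < f x} from hpos) _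
        rw [hgl]
        have hmain : Tendsto (fun s : ℝ => 1 + Real.log (f l + 1/s) / Real.log s)
            atTop (nhds 1) := by
          have h1 : Tendsto (fun s : ℝ => Real.log (f l + 1/s)) atTop
              (nhds (Real.log (f l))) := by
            have hinv : Tendsto (fun s : ℝ => 1/s) atTop (nhds (0:ℝ)) := by
              simp only [one_div]; exact tendsto_inv_atTop_zero
            have hadd : Tendsto (fun s : ℝ => f l + 1/s) atTop (nhds (f l + 0)) :=
              (tendsto_const_nhds : Tendsto (fun _ : ℝ => f l) atTop (nhds (f l))).add hinv
            rw [add_zero] at hadd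
            exact ((Real.continuousAt_log (ne_of_gt hpos)).tendsto).comp hadd
          have h2 : Tendsto (fun s : ℝ => Real.log s) atTop atTop := Real.tendsto_log_atTop
          have := h1.div_atTop h2
          simpa using tendsto_const_nhds.add this
        apply hmain.congr'
        filter_upwards [eventually_gt_atTop (1:ℝ)] with s hs
        have hs0 : (0:ℝ) < s := by linarith
        have hx : 0 < f l + 1/s := by positivity
        have hlogs : 0 < Real.log s := Real.log_pos hs
        have h1 : (1:ℝ) + s * f l = s * (f l + 1/s) := by field_simp; ring
        rw [h1, Real.log_mul (ne_of_gt hs0) (ne_of_gt hx)]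
        field_simp
  -- identify the limit integral
  have hgint : ∫ l, g l ∂μr = (volume {l ∈ I | 0 < f l}).toReal := by
    have h1 : ∫ l, g l ∂μr = (μr {x : ℝ | 0 < f x}).toReal :=
      MeasureTheory.integral_indicator_one hS
    rw [h1, hμr, Measure.restrict_apply hS]
    congr 2
    ext x
    simp only [Set.mem_inter_iff, Set.mem_setOf_eq, Set.mem_sep_iff, and_comm]
  rw [← hgint]
  apply main.congr
  intro s
  rw [MeasureTheory.integral_const_mul]
end

section
/- Let K be an n×n positive semidefinite Hermitian complex matrix, let X be a diagonal n×n complex matrix whose diagonal entries satisfy |x_k|² ≤ A² for all k (A > 0), and let σ² > 0. Then det(I + (1/σ²)·K·Xᴴ·X) ≤ det(I + (A²/σ²)·K), where Xᴴ denotes the conjugate transpose. -/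
/-!
Write `K = Bᴴ B`. Sylvester's identity gives `det (1 + K M) = det (1 + B M Bᴴ)`, and `M ↦ B M Bᴴ`
preserves the Loewner order, so `det (1 + K M)` is monotone in `M ⪰ 0` because `det` is monotone
on positive definite matrices: `det (P + Dᴴ D) = det P · det (1 + D P⁻¹ Dᴴ)` and the second factor
is at least `1`. Apply this to `σ⁻² XᴴX ⪯ (A² / σ²) • 1`.
-/

open Matrix
open scoped ComplexOrder

namespace Matrix

open scoped MatrixOrder

variable {𝕜 n : Type*} [RCLike 𝕜] [Fintype n] [DecidableEq n]

open scoped Pointwise in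
theorem PosSemidef.one_le_det_one_add {N : Matrix n n 𝕜} (hN : N.PosSemidef) :
    1 ≤ (1 + N).det := by
  have hH : (1 + N).IsHermitian := isHermitian_one.add hN.1
  have one_le_eigenvalues (i : n) : 1 ≤ hH.eigenvalues i := by
    obtain ⟨_, rfl, μ, hμ, hi⟩ : hH.eigenvalues i ∈ ({1} + spectrum ℝ N : Set ℝ) := by
      rw [spectrum.singleton_add_eq, map_one]
      exact hH.eigenvalues_mem_spectrum_real i
    have := spectrum_nonneg_of_nonneg hN.nonneg hμ
    linarith
  rw [hH.det_eq_prod_eigenvalues, ← RCLike.ofReal_prod, ← RCLike.ofReal_one,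
    RCLike.ofReal_le_ofReal]
  exact Finset.one_le_prod fun i _ => one_le_eigenvalues i

theorem PosDef.det_le_det_add {P N : Matrix n n 𝕜} (hP : P.PosDef) (hN : N.PosSemidef) :
    P.det ≤ (P + N).det := by
  obtain ⟨D, rfl⟩ := CStarAlgebra.nonneg_iff_eq_star_mul_self.mp hN.nonneg
  rw [det_add_mul _ _ ((isUnit_iff_isUnit_det P).mp hP.isUnit), star_eq_conjTranspose]
  exact le_mul_of_one_le_right hP.det_pos.le
    (hP.posSemidef.inv.mul_mul_conjTranspose_same D).one_le_det_one_add

theorem det_one_add_mul_le_det_one_add_mul {K M M' : Matrix n n 𝕜} (hK : K.PosSemidef)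
    (hM : M.PosSemidef) (hMM' : (M' - M).PosSemidef) :
    (1 + K * M).det ≤ (1 + K * M').det := by
  obtain ⟨B, rfl⟩ := CStarAlgebra.nonneg_iff_eq_star_mul_self.mp hK.nonneg
  have sylvester (M : Matrix n n 𝕜) : (1 + star B * B * M).det = (1 + B * M * Bᴴ).det := by
    rw [mul_assoc, det_one_add_mul_comm, star_eq_conjTranspose]
  have split : 1 + B * M' * Bᴴ = (1 + B * M * Bᴴ) + B * (M' - M) * Bᴴ := by
    rw [add_assoc, ← add_mul, ← mul_add, add_sub_cancel]
  rw [sylvester, sylvester, split]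
  exact (PosDef.one.add_posSemidef (hM.mul_mul_conjTranspose_same B)).det_le_det_add
    (hMM'.mul_mul_conjTranspose_same B)

theorem posSemidef_smul_one_sub_conjTranspose_diagonal_mul_diagonal {x : n → 𝕜} {a : ℝ}
    (hx : ∀ k, ‖x k‖ ^ 2 ≤ a) : ((a : 𝕜) • 1 - (diagonal x)ᴴ * diagonal x).PosSemidef := by
  rw [diagonal_conjTranspose, diagonal_mul_diagonal, ← diagonal_one, ← diagonal_smul,
    diagonal_sub]
  refine PosSemidef.diagonal fun k => ?_
  simp only [Pi.smul_apply, Pi.star_apply, RCLike.star_def, RCLike.conj_mul, Pi.zero_apply]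
  rw [smul_eq_mul, mul_one, ← RCLike.ofReal_pow, ← RCLike.ofReal_sub, RCLike.ofReal_nonneg]
  exact sub_nonneg.mpr (hx k)

end Matrix

theorem stmt_12_general (n : ℕ) (K : Matrix (Fin n) (Fin n) ℂ) (hK : K.PosSemidef)
    (x : Fin n → ℂ) (A : ℝ)
    (hx : ∀ k, ‖x k‖ ^ 2 ≤ A ^ 2) (σ2 : ℝ) (hσ : 0 < σ2) :
    (1 + ((σ2 : ℂ)⁻¹) •
        (K * (Matrix.diagonal x)ᴴ * Matrix.diagonal x)).det ≤
      (1 + ((A ^ 2 / σ2 : ℝ) : ℂ) • K).det := by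
  have hσinv : (0 : ℂ) ≤ (σ2 : ℂ)⁻¹ := by
    rw [← Complex.ofReal_inv, Complex.zero_le_real]
    exact inv_nonneg.mpr hσ.le
  have hM : ((σ2 : ℂ)⁻¹ • ((diagonal x)ᴴ * diagonal x)).PosSemidef :=
    (posSemidef_conjTranspose_mul_self _).smul hσinv
  have hgap :
      (((A ^ 2 / σ2 : ℝ) : ℂ) • 1 - (σ2 : ℂ)⁻¹ • ((diagonal x)ᴴ * diagonal x)).PosSemidef := by
    have : ((A ^ 2 / σ2 : ℝ) : ℂ) • (1 : Matrix (Fin n) (Fin n) ℂ) =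
        (σ2 : ℂ)⁻¹ • ((A ^ 2 : ℝ) : ℂ) • 1 := by
      rw [smul_smul]
      push_cast
      ring_nf
    rw [this, ← smul_sub]
    exact (posSemidef_smul_one_sub_conjTranspose_diagonal_mul_diagonal hx).smul hσinv
  simpa only [mul_smul_comm, mul_one, mul_assoc] using
    det_one_add_mul_le_det_one_add_mul hK hM hgap

/-- If `K` is PSD Hermitian, `X = diag(x)` with `|x k|² ≤ A²`, and `σ² > 0`, then
`det (I + (1/σ²) K Xᴴ X) ≤ det (I + (A²/σ²) K)`. -/
theorem stmt_12 (n : ℕ) (K : Matrix (Fin n) (Fin n) ℂ) (hK : K.PosSemidef)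
    (x : Fin n → ℂ) (A : ℝ) (hA : 0 < A)
    (hx : ∀ k, ‖x k‖ ^ 2 ≤ A ^ 2) (σ2 : ℝ) (hσ : 0 < σ2) :
    (1 + ((σ2 : ℂ)⁻¹) •
        (K * (Matrix.diagonal x)ᴴ * Matrix.diagonal x)).det ≤
      (1 + ((A ^ 2 / σ2 : ℝ) : ℂ) • K).det :=
  stmt_12_general n K hK x A hx σ2 hσ
end

section
/- If K is an n×n Hermitian positive semidefinite complex matrix and M, N are Hermitian matrices with 0 ⪯ M ⪯ N (N − M positive semidefinite), then det(I + K·M) ≤ det(I + K·N). -/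
/-!
Write `K = SᴴS`. Sylvester's identity `det (1 + AB) = det (1 + BA)` turns `det (1 + K X)` into
`det (1 + S X Sᴴ)`, and `1 + S N Sᴴ = (1 + S M Sᴴ) + S (N - M) Sᴴ` is a positive definite matrix
plus a positive semidefinite one. The determinant increases along such sums: for `R ≻ 0`,
`det (R + BᴴB) = det R · det (1 + B R⁻¹ Bᴴ)`, and the last factor is at least `1` because every
eigenvalue of `1 + C` with `C ⪰ 0` is at least `1`.
-/

open Matrix
open scoped ComplexOrder

section

open scoped MatrixOrder

variable {𝕜 n : Type*} [RCLike 𝕜] [Fintype n] [DecidableEq n]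

theorem Matrix.PosSemidef.exists_eq_conjTranspose_mul_self {A : Matrix n n 𝕜}
    (hA : A.PosSemidef) : ∃ B : Matrix n n 𝕜, A = Bᴴ * B :=
  CStarAlgebra.nonneg_iff_eq_star_mul_self.mp hA.nonneg

theorem Matrix.PosSemidef.one_le_det_one_add_s13 {C : Matrix n n 𝕜} (hC : C.PosSemidef) :
    1 ≤ (1 + C).det := by
  have hH : (1 + C).IsHermitian := isHermitian_one.add hC.isHermitian
  have h_eig (i : n) : 1 ≤ hH.eigenvalues i := by
    have h_one_le : algebraMap ℝ (Matrix n n 𝕜) 1 ≤ 1 + C := by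
      simpa using le_add_of_nonneg_right (a := 1) hC.nonneg
    exact (algebraMap_le_iff_le_spectrum hH.isSelfAdjoint).mp h_one_le _
      (hH.eigenvalues_mem_spectrum_real i)
  rw [hH.det_eq_prod_eigenvalues, ← RCLike.ofReal_prod]
  exact_mod_cast Finset.one_le_prod fun i _ ↦ h_eig i

theorem Matrix.PosDef.det_le_det_add_s13 {R P : Matrix n n 𝕜} (hR : R.PosDef) (hP : P.PosSemidef) :
    R.det ≤ (R + P).det := by
  obtain ⟨B, rfl⟩ := hP.exists_eq_conjTranspose_mul_self
  have hRR : R * R⁻¹ = 1 := mul_nonsing_inv R (isUnit_iff_ne_zero.mpr hR.det_pos.ne')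
  have h_factor : R + Bᴴ * B = R * (1 + R⁻¹ * Bᴴ * B) := by
    rw [Matrix.mul_add, Matrix.mul_one, ← Matrix.mul_assoc, ← Matrix.mul_assoc, hRR,
      Matrix.one_mul]
  have h_conj : (B * (R⁻¹ * Bᴴ)).PosSemidef := by
    simpa only [Matrix.mul_assoc] using hR.posSemidef.inv.mul_mul_conjTranspose_same B
  rw [h_factor, det_mul, det_one_add_mul_comm]
  exact le_mul_of_one_le_right hR.det_pos.le h_conj.one_le_det_one_add_s13

end

theorem stmt_13_general (n : ℕ) (K M N : Matrix (Fin n) (Fin n) ℂ)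
    (hK : K.PosSemidef) (hM : M.PosSemidef)
    (hMN : (N - M).PosSemidef) :
    (1 + K * M).det ≤ (1 + K * N).det := by
  obtain ⟨S, rfl⟩ := hK.exists_eq_conjTranspose_mul_self
  have h_sylvester (X : Matrix (Fin n) (Fin n) ℂ) :
      (1 + Sᴴ * S * X).det = (1 + S * X * Sᴴ).det := by
    rw [Matrix.mul_assoc, det_one_add_mul_comm]
  have h_split : 1 + S * N * Sᴴ = (1 + S * M * Sᴴ) + S * (N - M) * Sᴴ := by
    rw [Matrix.mul_sub, Matrix.sub_mul]
    abel
  rw [h_sylvester, h_sylvester, h_split]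
  exact (PosDef.one.add_posSemidef (hM.mul_mul_conjTranspose_same S)).det_le_det_add_s13
    (hMN.mul_mul_conjTranspose_same S)

/-- If `K ⪰ 0` and `0 ⪯ M ⪯ N` (all Hermitian), then
`det (I + K M) ≤ det (I + K N)`. -/
theorem stmt_13 (n : ℕ) (K M N : Matrix (Fin n) (Fin n) ℂ)
    (hK : K.PosSemidef) (hM : M.PosSemidef) (hN : N.IsHermitian)
    (hMN : (N - M).PosSemidef) :
    (1 + K * M).det ≤ (1 + K * N).det :=
  stmt_13_general n K M N hK hM hMN
end

section
/- Let f : [-1/2,1/2] → [0,∞) be integrable with μ({f = 0}) = m₀ and suppose p ∈ [0,1] is arbitrary. If L(s) := p·log s − c − ∫ log(1 + s f(λ)) dλ for a constant c, then limsup_{s→∞} L(s)/log s = p − μ({λ : f(λ) > 0}) = p − (1 − m₀). -/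
open Real Filter MeasureTheory Set Topology

/-!
Since `log (1 + s a) = log s + log (a + 1/s)` for `a > 0`, the ratio `log (1 + s a) / log s`
tends to `1` where `a > 0` and is `0` where `a = 0`; it is dominated by `1 + a` once `log s ≥ 1`.
Dominated convergence then gives `(∫ log (1 + s f)) / log s → μ {f > 0} = 1 - m₀`, so `L s / log s`
actually converges to `p - (1 - m₀)`, which is therefore also its limsup.
-/

namespace Real

lemma tendsto_log_one_add_mul_div_log {a : ℝ} (ha : 0 < a) :
    Tendsto (fun s => log (1 + s * a) / log s) atTop (𝓝 1) := by
  have hsplit : ∀ᶠ s : ℝ in atTop, 1 + log (a + s⁻¹) / log s = log (1 + s * a) / log s := by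
    filter_upwards [eventually_gt_atTop 1] with s hs
    have hs0 : 0 < s := one_pos.trans hs
    rw [show 1 + s * a = s * (a + s⁻¹) by field_simp; ring,
      log_mul hs0.ne' (by positivity), add_div, div_self (log_pos hs).ne']
  have hlog : Tendsto (fun s : ℝ => log (a + s⁻¹)) atTop (𝓝 (log a)) := by
    have h := tendsto_inv_atTop_zero.const_add a
    rw [add_zero] at h
    exact (continuousAt_log ha.ne').tendsto.comp h
  simpa using ((hlog.div_atTop tendsto_log_atTop).const_add 1).congr' hsplit

lemma log_one_add_mul_le_log_add {a s : ℝ} (ha : 0 ≤ a) (hs : 1 ≤ s) :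
    log (1 + s * a) ≤ log s + a := by
  calc log (1 + s * a) ≤ log (s * (1 + a)) := log_le_log (by positivity) (by nlinarith)
    _ = log s + log (1 + a) := log_mul (by positivity) (by positivity)
    _ ≤ log s + a := by linarith [log_le_sub_one_of_pos (by positivity : 0 < 1 + a)]

end Real

theorem tendsto_integral_log_one_add_mul_div_log {α : Type*} [MeasurableSpace α]
    {μ : Measure α} [IsFiniteMeasure μ] {f : α → ℝ} (hf : Measurable f) (hf0 : ∀ x, 0 ≤ f x)
    (hfi : Integrable f μ) :
    Tendsto (fun s => (∫ x, log (1 + s * f x) ∂μ) / log s) atTop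
      (𝓝 (μ.real {x | f x ≠ 0})) := by
  have hpos : MeasurableSet {x | f x ≠ 0} := (measurableSet_singleton 0).preimage hf |>.compl
  simp_rw [← integral_indicator_one hpos, ← integral_div]
  refine tendsto_integral_filter_of_dominated_convergence (fun x => 1 + f x)
    (Eventually.of_forall fun s => ?_) ?_ ((integrable_const 1).add hfi)
    (ae_of_all _ fun x => ?_)
  · exact ((measurable_log.comp (by fun_prop)).div_const _).aestronglyMeasurable
  · filter_upwards [eventually_ge_atTop 1, tendsto_log_atTop.eventually_ge_atTop 1]
      with s hs hlog
    refine ae_of_all _ fun x => ?_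
    have hnum : 0 ≤ log (1 + s * f x) := log_nonneg (by nlinarith [hf0 x])
    rw [norm_of_nonneg (by positivity), div_le_iff₀ (by positivity)]
    nlinarith [log_one_add_mul_le_log_add (hf0 x) hs, hf0 x]
  · by_cases hx : f x = 0
    · simp [hx]
    · simpa [hx] using tendsto_log_one_add_mul_div_log ((hf0 x).lt_of_ne' hx)

theorem tendsto_sub_integral_log_one_add_mul_div_log {α : Type*} [MeasurableSpace α]
    {μ : Measure α} [IsFiniteMeasure μ] {f : α → ℝ} (hf : Measurable f) (hf0 : ∀ x, 0 ≤ f x)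
    (hfi : Integrable f μ) (p c : ℝ) :
    Tendsto (fun s => (p * log s - c - ∫ x, log (1 + s * f x) ∂μ) / log s) atTop
      (𝓝 (p - μ.real {x | f x ≠ 0})) := by
  have hsplit : ∀ᶠ s : ℝ in atTop, p - c / log s - (∫ x, log (1 + s * f x) ∂μ) / log s
      = (p * log s - c - ∫ x, log (1 + s * f x) ∂μ) / log s := by
    filter_upwards [eventually_gt_atTop 1] with s hs
    field_simp [(log_pos hs).ne']
  have hc : Tendsto (fun s => c / log s) atTop (𝓝 0) :=
    tendsto_const_nhds.div_atTop tendsto_log_atTop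
  simpa using ((tendsto_const_nhds.sub hc).sub
    (tendsto_integral_log_one_add_mul_div_log hf hf0 hfi)).congr' hsplit

theorem stmt_18_general (f : ℝ → ℝ) (hf : Measurable f) (hf0 : ∀ x, 0 ≤ f x)
    (hfint : MeasureTheory.IntegrableOn f (Set.Icc (-(1/2) : ℝ) (1/2)))
    (m₀ : ℝ)
    (hm₀ : (MeasureTheory.volume
        ({l ∈ Set.Icc (-(1/2) : ℝ) (1/2) | f l = 0})).toReal = m₀)
    (p : ℝ) (c : ℝ) :
    Filter.limsup
      (fun s : ℝ =>
        (p * Real.log s - c -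
            ∫ l in Set.Icc (-(1/2) : ℝ) (1/2), Real.log (1 + s * f l)) /
          Real.log s)
      Filter.atTop = p - (1 - m₀) := by
  set I : Set ℝ := Icc (-(1/2)) (1/2)
  have : IsProbabilityMeasure (volume.restrict I) :=
    ⟨by rw [Measure.restrict_apply_univ, Real.volume_Icc]; norm_num⟩
  have hzero : MeasurableSet {l | f l = 0} := (measurableSet_singleton 0).preimage hf
  have hpos : (volume.restrict I).real {l | f l ≠ 0} = 1 - m₀ := by
    rw [← compl_ofPred, probReal_compl_eq_one_sub hzero, measureReal_restrict_apply hzero,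
      inter_comm, ← hm₀]
    rfl
  rw [← hpos]
  exact (tendsto_sub_integral_log_one_add_mul_div_log hf hf0 hfint p c).limsup_eq

/-- Pre-log asymptotics: for nonnegative integrable `f` on `[-1/2, 1/2]` with
`μ {f = 0} = m₀`, `p ∈ [0,1]`, and
`L s = p log s - c - ∫ log (1 + s f)`, one has
`limsup_{s → ∞} L s / log s = p - (1 - m₀)`. -/
theorem stmt_18 (f : ℝ → ℝ) (hf : Measurable f) (hf0 : ∀ x, 0 ≤ f x)
    (hfint : MeasureTheory.IntegrableOn f (Set.Icc (-(1/2) : ℝ) (1/2)))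
    (m₀ : ℝ)
    (hm₀ : (MeasureTheory.volume
        ({l ∈ Set.Icc (-(1/2) : ℝ) (1/2) | f l = 0})).toReal = m₀)
    (p : ℝ) (hp0 : 0 ≤ p) (hp1 : p ≤ 1) (c : ℝ) :
    Filter.limsup
      (fun s : ℝ =>
        (p * Real.log s - c -
            ∫ l in Set.Icc (-(1/2) : ℝ) (1/2), Real.log (1 + s * f l)) /
          Real.log s)
      Filter.atTop = p - (1 - m₀) :=
  stmt_18_general f hf hf0 hfint m₀ hm₀ p c
end
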